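/- arXiv:2511.11254 — 3 statements merged into one kernel-verified Lean document; each statement's English description precedes it below -/
import Mathlib

section
/- Let G be a finite group, F a group, (F, G, ◁, ▷) a matched pair, σ, τ cocycle data, H = k^G τ#_σ kF, and let R : H × H → k be a bilinear form. Then (H, R) is coquasitriangular if and only if for all g, h, l ∈ G and f, f', f'' ∈ F the following hold: (CQT0) Σ_{x∈G} R(p_x#1, p_g#f) = Σ_{x∈G} R(p_g#f, p_x#1) = δ_{g,1}; (CQT1) δ_{h◁f', l} σ(h; f', f'') R(p_g#f, p_h#(f'f'')) = Σ_{x∈G} τ(g x⁻¹, x; f) R(p_{g x⁻¹}#(x▷f), p_l#f'') R(p_x#f, p_h#f'); (CQT2) δ_{g◁f, h} σ(g; f, f') R(p_g#(ff'), p_l#f'') = Σ_{x∈G} τ(l x⁻¹, x; f'') R(p_g#f, p_{l x⁻¹}#(x▷f'')) R(p_h#f', p_x#f''); (CQT3) as an identity in the group algebra kF: τ(g l⁻¹, l; f) τ(h(l◁f)⁻¹, l◁f; f') R(p_{g l⁻¹}#(l▷f), p_{h(l◁f)⁻¹}#((l◁f)▷f')) σ(l; f, f') · (f f') = τ((h◁f')((l⁻¹h)◁f')⁻¹,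 ((l⁻¹h)◁f')(h◁f')⁻¹ g; f) τ(l, l⁻¹h; f') R(p_{((l⁻¹h)◁f')(h◁f')⁻¹ g}#f, p_{l⁻¹h}#f') σ(l; (l⁻¹h)▷f', (((l⁻¹h)◁f')(h◁f')⁻¹ g)▷f) · (((l⁻¹h)▷f')((((l⁻¹h)◁f')(h◁f')⁻¹ g)▷f)). -/
/-!
A bilinear form on `H` is determined by its values `R g f h f'` on pairs of basis elements, and
the two multiplicativity axioms are (CQT1) and (CQT2) read on the basis. Given these, convolution
invertibility is equivalent to (CQT0). If `R` has a convolution inverse, (CQT1) with `c = 1` says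
`R(a, 1) ε(b) * R = R`, and cancelling `R` gives `R(a, 1) = ε(a)`; symmetrically (CQT2) gives
`R(1, b) = ε(b)`. Conversely `R'(a, b) = R(S a, b)` is an inverse: by (CQT2) the convolution
`R * R'` is `R(a₁ S a₂, b) = ε(a) R(1, b)`, and similarly for `R' * R`. Finally, evaluated at
`p_l # w`, each side of the quasi-commutativity axiom has a single nonzero term, and comparing
them is exactly (CQT3).
-/

/-- A matched pair of groups `(F, G, ◁, ▷)`: `rtr g f = g ▷ f` is an action of the
group `G` on the set `F`, and `ltl g f = g ◁ f` is an action of the group `F` on the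
set `G`, satisfying the matched pair compatibility conditions. -/
structure MatchedPair (F G : Type*) [Group F] [Group G] where
  rtr : G → F → F
  ltl : G → F → G
  one_rtr : ∀ f, rtr 1 f = f
  mul_rtr : ∀ g g' f, rtr (g * g') f = rtr g (rtr g' f)
  ltl_one : ∀ g, ltl g 1 = g
  ltl_mul : ∀ g f f', ltl g (f * f') = ltl (ltl g f) f'
  rtr_mul : ∀ g f f', rtr g (f * f') = rtr g f * rtr (ltl g f) f'
  mul_ltl : ∀ g g' f, ltl (g * g') f = ltl g (rtr g' f) * ltl g' f

/-- Cocycle data `(σ, τ)` for the abelian extension `k^G τ#_σ kF`. -/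
structure CocycleData (k F G : Type*) [Field k] [Group F] [Group G]
    (mp : MatchedPair F G) where
  sig : G → F → F → kˣ
  tau : G → G → F → kˣ
  sig_one_left : ∀ g f, sig g 1 f = 1
  sig_one_right : ∀ g f, sig g f 1 = 1
  one_sig : ∀ f f', sig 1 f f' = 1
  sig_cocycle : ∀ g f f' f'',
    sig (mp.ltl g f) f' f'' * sig g f (f' * f'') = sig g f f' * sig g (f * f') f''
  one_tau : ∀ g f, tau 1 g f = 1
  tau_one : ∀ g f, tau g 1 f = 1
  tau_one_right : ∀ g g', tau g g' 1 = 1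
  tau_cocycle : ∀ g g' g'' f,
    tau g g' (mp.rtr g'' f) * tau (g * g') g'' f = tau g (g' * g'') f * tau g' g'' f
  compat : ∀ g g' f f',
    sig (g * g') f f' * tau g g' (f * f')
      = sig g (mp.rtr g' f) (mp.rtr (mp.ltl g' f) f') * sig g' f f' * tau g g' f
        * tau (mp.ltl g (mp.rtr g' f)) (mp.ltl g' f) f'

/-- The product `(p_g # f)(p_{g'} # f') = δ_{g ◁ f, g'} σ(g; f, f') p_g # (f f')` of two
basis elements of `H = k^G τ#_σ kF`, as an element of `H` (realized as `(G × F) →₀ k`). -/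
noncomputable def mulB {k F G : Type*} [Field k] [Group F] [Group G] [DecidableEq G]
    (mp : MatchedPair F G) (cd : CocycleData k F G mp) (i j : G × F) : (G × F) →₀ k :=
  if mp.ltl i.1 i.2 = j.1 then
    Finsupp.single (i.1, i.2 * j.2) ((cd.sig i.1 i.2 j.2 : kˣ) : k)
  else 0

/-- `R` (given by its values `R g f h f' = R(p_g # f, p_h # f')` on the basis
`{p_g # f}` of `H = k^G τ#_σ kF`) is a coquasitriangular structure on `H`:
it is convolution invertible, satisfies `R(a, bc) = Σ R(a₁, c) R(a₂, b)` and
`R(ab, c) = Σ R(a, c₁) R(b, c₂)`, and the quasi-commutativity axiom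
`Σ R(a₁, b₁) a₂ b₂ = Σ b₁ a₁ R(a₂, b₂)`, all expressed on basis elements using
`Δ(p_g # f) = Σ_x τ(g x⁻¹, x; f) (p_{g x⁻¹} # (x ▷ f)) ⊗ (p_x # f)` and
`ε(p_g # f) = δ_{g,1}`. -/
structure IsCQT {k F G : Type*} [Field k] [Group F] [Group G] [Fintype G] [DecidableEq G]
    (mp : MatchedPair F G) (cd : CocycleData k F G mp)
    (R : G → F → G → F → k) : Prop where
  conv_inv : ∃ R' : G → F → G → F → k,
    (∀ (g h : G) (f f' : F),
      ∑ x : G, ∑ y : G,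
        ((cd.tau (g * x⁻¹) x f : kˣ) : k) * ((cd.tau (h * y⁻¹) y f' : kˣ) : k) *
          R (g * x⁻¹) (mp.rtr x f) (h * y⁻¹) (mp.rtr y f') * R' x f y f'
        = (if g = 1 then (1 : k) else 0) * (if h = 1 then (1 : k) else 0)) ∧
    (∀ (g h : G) (f f' : F),
      ∑ x : G, ∑ y : G,
        ((cd.tau (g * x⁻¹) x f : kˣ) : k) * ((cd.tau (h * y⁻¹) y f' : kˣ) : k) *
          R' (g * x⁻¹) (mp.rtr x f) (h * y⁻¹) (mp.rtr y f') * R x f y f'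
        = (if g = 1 then (1 : k) else 0) * (if h = 1 then (1 : k) else 0))
  cqt1 : ∀ (g h l : G) (f f' f'' : F),
    (if mp.ltl h f' = l then (1 : k) else 0) * ((cd.sig h f' f'' : kˣ) : k)
        * R g f h (f' * f'')
      = ∑ x : G, ((cd.tau (g * x⁻¹) x f : kˣ) : k)
          * R (g * x⁻¹) (mp.rtr x f) l f'' * R x f h f'
  cqt2 : ∀ (g h l : G) (f f' f'' : F),
    (if mp.ltl g f = h then (1 : k) else 0) * ((cd.sig g f f' : kˣ) : k)
        * R g (f * f') l f''
      = ∑ x : G, ((cd.tau (l * x⁻¹) x f'' : kˣ) : k)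
          * R g f (l * x⁻¹) (mp.rtr x f'') * R h f' x f''
  qcomm : ∀ (g h : G) (f f' : F),
    (∑ x : G, ∑ y : G,
      (((cd.tau (g * x⁻¹) x f : kˣ) : k) * ((cd.tau (h * y⁻¹) y f' : kˣ) : k) *
        R (g * x⁻¹) (mp.rtr x f) (h * y⁻¹) (mp.rtr y f')) • mulB mp cd (x, f) (y, f'))
      = ∑ x : G, ∑ y : G,
        (((cd.tau (g * x⁻¹) x f : kˣ) : k) * ((cd.tau (h * y⁻¹) y f' : kˣ) : k) *
          R x f y f') • mulB mp cd (h * y⁻¹, mp.rtr y f') (g * x⁻¹, mp.rtr x f)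

theorem Fintype.sum_sum_comm_sum_sum {α β M : Type*} [Fintype α] [Fintype β]
    [AddCommMonoid M] (F : α → α → β → β → M) :
    ∑ a, ∑ a', ∑ b, ∑ b', F a a' b b' = ∑ b, ∑ b', ∑ a, ∑ a', F a a' b b' := by
  simpa only [Fintype.sum_prod_type] using
    Finset.sum_comm (s := (Finset.univ : Finset (α × α)))
      (t := (Finset.univ : Finset (β × β))) (f := fun p q => F p.1 p.2 q.1 q.2)

theorem Fintype.sum_sum_eq_single {α β M : Type*} [Fintype α] [Fintype β]
    [AddCommMonoid M] (F : α → β → M) (a : α) (b : β)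
    (h : ∀ x y, ¬ (x = a ∧ y = b) → F x y = 0) :
    ∑ x, ∑ y, F x y = F a b := by
  rw [← Fintype.sum_prod_type']
  exact Fintype.sum_eq_single (a, b) fun p hp => h p.1 p.2 fun hab => hp (Prod.ext hab.1 hab.2)

namespace MatchedPair

variable {F G : Type*} [Group F] [Group G] (mp : MatchedPair F G)

theorem one_ltl (f : F) : mp.ltl 1 f = 1 := by
  simpa [mp.one_rtr] using mp.mul_ltl 1 1 f

theorem rtr_one (g : G) : mp.rtr g 1 = 1 := by
  simpa [mp.ltl_one] using mp.rtr_mul g 1 1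

theorem ltl_ltl_inv (g : G) (f : F) : mp.ltl (mp.ltl g f) f⁻¹ = g := by
  rw [← mp.ltl_mul, mul_inv_cancel, mp.ltl_one]

theorem ltl_ltl_inv' (g : G) (f : F) : mp.ltl (mp.ltl g f⁻¹) f = g := by
  rw [← mp.ltl_mul, inv_mul_cancel, mp.ltl_one]

theorem rtr_inv_rtr (g : G) (f : F) : mp.rtr g⁻¹ (mp.rtr g f) = f := by
  rw [← mp.mul_rtr, inv_mul_cancel, mp.one_rtr]

theorem ltl_mul_inv_rtr (g x : G) (f : F) :
    mp.ltl (g * x⁻¹) (mp.rtr x f) = mp.ltl g f * (mp.ltl x f)⁻¹ := by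
  rw [eq_mul_inv_iff_mul_eq, ← mp.mul_ltl, inv_mul_cancel_right]

theorem ltl_inv_rtr (g : G) (f : F) : mp.ltl g⁻¹ (mp.rtr g f) = (mp.ltl g f)⁻¹ := by
  simpa [mp.one_ltl] using mp.ltl_mul_inv_rtr 1 g f

theorem rtr_ltl_inv (g : G) (f : F) : mp.rtr (mp.ltl g f) f⁻¹ = (mp.rtr g f)⁻¹ :=
  eq_inv_of_mul_eq_one_right (by rw [← mp.rtr_mul, mul_inv_cancel, mp.rtr_one])

theorem ltl_inv_rtr_inv (g : G) (f : F) :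
    mp.ltl (mp.ltl g f)⁻¹ (mp.rtr g f)⁻¹ = g⁻¹ := by
  rw [← mp.rtr_ltl_inv, mp.ltl_inv_rtr, mp.ltl_ltl_inv]

def ltlEquiv (f : F) : G ≃ G where
  toFun x := mp.ltl x f
  invFun x := mp.ltl x f⁻¹
  left_inv x := mp.ltl_ltl_inv x f
  right_inv x := mp.ltl_ltl_inv' x f

theorem ltl_eq_one_iff (g : G) (f : F) : mp.ltl g f = 1 ↔ g = 1 := by
  conv_lhs => rw [← mp.one_ltl f]
  exact (mp.ltlEquiv f).injective.eq_iff

end MatchedPair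

namespace CocycleData

variable {k F G : Type*} [Field k] [Group F] [Group G] {mp : MatchedPair F G}
variable (cd : CocycleData k F G mp)

theorem tau_inv_rtr (g : G) (f : F) : cd.tau g g⁻¹ (mp.rtr g f) = cd.tau g⁻¹ g f := by
  simpa [cd.one_tau, cd.tau_one] using cd.tau_cocycle g g⁻¹ g f

theorem sig_ltl_inv (g : G) (f : F) : cd.sig (mp.ltl g f) f⁻¹ f = cd.sig g f f⁻¹ := by
  simpa [cd.sig_one_left, cd.sig_one_right] using cd.sig_cocycle g f f⁻¹ f

theorem tau_cocycle_mul_inv (g x z : G) (f : F) :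
    cd.tau (g * x⁻¹ * z⁻¹) z (mp.rtr x f) * cd.tau (g * x⁻¹) x f
      = cd.tau (g * x⁻¹ * z⁻¹) (z * x) f * cd.tau z x f := by
  simpa using cd.tau_cocycle (g * x⁻¹ * z⁻¹) z x f

variable [Fintype G]

/-- `(A * B)(a, b) = Σ A(a₁, b₁) B(a₂, b₂)` on basis elements. -/
def conv (A B : G → F → G → F → k) : G → F → G → F → k :=
  fun g f h f' => ∑ x : G, ∑ y : G,
    ((cd.tau (g * x⁻¹) x f : kˣ) : k) * ((cd.tau (h * y⁻¹) y f' : kˣ) : k) *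
      A (g * x⁻¹) (mp.rtr x f) (h * y⁻¹) (mp.rtr y f') * B x f y f'

theorem conv_assoc (A B C : G → F → G → F → k) :
    cd.conv (cd.conv A B) C = cd.conv A (cd.conv B C) := by
  funext g f h f'
  simp only [conv, Finset.sum_mul, Finset.mul_sum]
  conv_rhs => rw [Fintype.sum_sum_comm_sum_sum]
  refine Finset.sum_congr rfl fun x _ => Finset.sum_congr rfl fun y _ => ?_
  conv_rhs => rw [← Equiv.sum_comp (Equiv.mulRight x)]
  refine Finset.sum_congr rfl fun z _ => ?_
  conv_rhs => rw [← Equiv.sum_comp (Equiv.mulRight y)]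
  refine Finset.sum_congr rfl fun w _ => ?_
  have e : ∀ a b c : G, a * (b * c)⁻¹ = a * c⁻¹ * b⁻¹ := fun a b c => by group
  simp only [Equiv.coe_mulRight, e, mul_inv_cancel_right, mp.mul_rtr]
  have hx := congrArg Units.val (cd.tau_cocycle_mul_inv g x z f)
  have hy := congrArg Units.val (cd.tau_cocycle_mul_inv h y w f')
  push_cast at hx hy
  have split : ∀ {a b c d a' b' c' d' X Y Z : k}, c * a = a' * c' → d * b = b' * d' →
      a * b * (c * d * X * Y) * Z = a' * b' * X * (c' * d' * Y * Z) := by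
    intro a b c d a' b' c' d' X Y Z hx hy
    linear_combination (b * d * X * Y * Z) * hx + (a' * c' * X * Y * Z) * hy
  exact split hx hy

variable [DecidableEq G]

def counitForm : G → F → G → F → k :=
  fun g _ h _ => (if g = 1 then (1 : k) else 0) * (if h = 1 then (1 : k) else 0)

theorem counitForm_conv (A : G → F → G → F → k) : cd.conv counitForm A = A := by
  funext g f h f'
  simp [conv, counitForm, mul_inv_eq_one, cd.one_tau]

theorem conv_counitForm (A : G → F → G → F → k) : cd.conv A counitForm = A := by
  funext g f h f'
  simp [conv, counitForm, cd.tau_one, mp.one_rtr]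

theorem conv_eq_counitForm_iff {A B : G → F → G → F → k} :
    cd.conv A B = counitForm ↔ ∀ g h f f', cd.conv A B g f h f' = counitForm g f h f' := by
  simp only [funext_iff]
  exact ⟨fun H g h f f' => H g f h f', fun H g f h f' => H g h f f'⟩

/-- `R(a, bc) = Σ R(a₁, c) R(a₂, b)` on basis elements. -/
def CQT1 (R : G → F → G → F → k) : Prop :=
  ∀ (g h l : G) (f f' f'' : F),
    (if mp.ltl h f' = l then (1 : k) else 0) * ((cd.sig h f' f'' : kˣ) : k)
        * R g f h (f' * f'')
      = ∑ x : G, ((cd.tau (g * x⁻¹) x f : kˣ) : k)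
          * R (g * x⁻¹) (mp.rtr x f) l f'' * R x f h f'

/-- `R(ab, c) = Σ R(a, c₁) R(b, c₂)` on basis elements. -/
def CQT2 (R : G → F → G → F → k) : Prop :=
  ∀ (g h l : G) (f f' f'' : F),
    (if mp.ltl g f = h then (1 : k) else 0) * ((cd.sig g f f' : kˣ) : k)
        * R g (f * f') l f''
      = ∑ x : G, ((cd.tau (l * x⁻¹) x f'' : kˣ) : k)
          * R g f (l * x⁻¹) (mp.rtr x f'') * R h f' x f''

/-- `Σ R(a₁, b₁) a₂ b₂ = Σ b₁ a₁ R(a₂, b₂)` on basis elements. -/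
def QuasiComm (R : G → F → G → F → k) : Prop :=
  ∀ (g h : G) (f f' : F),
    (∑ x : G, ∑ y : G,
      (((cd.tau (g * x⁻¹) x f : kˣ) : k) * ((cd.tau (h * y⁻¹) y f' : kˣ) : k) *
        R (g * x⁻¹) (mp.rtr x f) (h * y⁻¹) (mp.rtr y f')) • mulB mp cd (x, f) (y, f'))
      = ∑ x : G, ∑ y : G,
        (((cd.tau (g * x⁻¹) x f : kˣ) : k) * ((cd.tau (h * y⁻¹) y f' : kˣ) : k) *
          R x f y f') • mulB mp cd (h * y⁻¹, mp.rtr y f') (g * x⁻¹, mp.rtr x f)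

def CQT3 (R : G → F → G → F → k) : Prop :=
  ∀ (g h l : G) (f f' : F),
    (Finsupp.single (f * f')
        (((cd.tau (g * l⁻¹) l f : kˣ) : k)
          * ((cd.tau (h * (mp.ltl l f)⁻¹) (mp.ltl l f) f' : kˣ) : k)
          * R (g * l⁻¹) (mp.rtr l f) (h * (mp.ltl l f)⁻¹)
              (mp.rtr (mp.ltl l f) f')
          * ((cd.sig l f f' : kˣ) : k)) : F →₀ k)
      = Finsupp.single
          (mp.rtr (l⁻¹ * h) f'
            * mp.rtr (mp.ltl (l⁻¹ * h) f' * (mp.ltl h f')⁻¹ * g) f)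
          (((cd.tau (mp.ltl h f' * (mp.ltl (l⁻¹ * h) f')⁻¹)
                (mp.ltl (l⁻¹ * h) f' * (mp.ltl h f')⁻¹ * g) f : kˣ) : k)
            * ((cd.tau l (l⁻¹ * h) f' : kˣ) : k)
            * R (mp.ltl (l⁻¹ * h) f' * (mp.ltl h f')⁻¹ * g) f (l⁻¹ * h) f'
            * ((cd.sig l (mp.rtr (l⁻¹ * h) f')
                (mp.rtr (mp.ltl (l⁻¹ * h) f' * (mp.ltl h f')⁻¹ * g) f) : kˣ) : k))

variable {cd}

/-- `(a, b) ↦ R(a, 1) ε(b)`, where `1 = Σ_l p_l # 1`. -/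
def unitRight (R : G → F → G → F → k) : G → F → G → F → k :=
  fun g f h _ => (∑ l : G, R g f l 1) * (if h = 1 then (1 : k) else 0)

/-- `(a, b) ↦ ε(a) R(1, b)`. -/
def unitLeft (R : G → F → G → F → k) : G → F → G → F → k :=
  fun g _ h f' => (if g = 1 then (1 : k) else 0) * (∑ x : G, R x 1 h f')

theorem conv_unitRight_self {R : G → F → G → F → k} (h1 : cd.CQT1 R) :
    cd.conv (unitRight R) R = R := by
  funext g f h f'
  have collapse : ∀ x, ∑ y : G,
      ((cd.tau (g * x⁻¹) x f : kˣ) : k) * ((cd.tau (h * y⁻¹) y f' : kˣ) : k) *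
        unitRight R (g * x⁻¹) (mp.rtr x f) (h * y⁻¹) (mp.rtr y f') * R x f y f'
      = ∑ l : G,
          ((cd.tau (g * x⁻¹) x f : kˣ) : k) * R (g * x⁻¹) (mp.rtr x f) l 1 * R x f h f' := by
    intro x
    simp [unitRight, mul_inv_eq_one, cd.one_tau, Finset.sum_mul, Finset.mul_sum, mul_assoc]
  simp only [conv, collapse]
  rw [Finset.sum_comm, Finset.sum_congr rfl fun l _ => (h1 g h l f f' 1).symm]
  simp [cd.sig_one_right]

theorem conv_self_unitLeft {R : G → F → G → F → k} (h2 : cd.CQT2 R) :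
    cd.conv R (unitLeft R) = R := by
  funext g f l f''
  have collapse : ∑ x : G, ∑ y : G,
      ((cd.tau (g * x⁻¹) x f : kˣ) : k) * ((cd.tau (l * y⁻¹) y f'' : kˣ) : k) *
        R (g * x⁻¹) (mp.rtr x f) (l * y⁻¹) (mp.rtr y f'') * unitLeft R x f y f''
      = ∑ y : G, ∑ h : G, ((cd.tau (l * y⁻¹) y f'' : kˣ) : k)
          * R g f (l * y⁻¹) (mp.rtr y f'') * R h 1 y f'' := by
    simp [unitLeft, cd.tau_one, mp.one_rtr, Finset.mul_sum, mul_assoc]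
  rw [conv, collapse, Finset.sum_comm, Finset.sum_congr rfl fun h _ => (h2 g h l f 1 f'').symm]
  simp [cd.sig_one_right]

variable (cd)

theorem sum_one_left_of_CQT2 {R R' : G → F → G → F → k} (h2 : cd.CQT2 R)
    (hinv : cd.conv R' R = counitForm) (g : G) (f : F) :
    ∑ x : G, R x 1 g f = if g = 1 then (1 : k) else 0 := by
  have hU : unitLeft R = counitForm :=
    calc unitLeft R = cd.conv counitForm (unitLeft R) := (cd.counitForm_conv _).symm
      _ = cd.conv (cd.conv R' R) (unitLeft R) := by rw [hinv]
      _ = cd.conv R' (cd.conv R (unitLeft R)) := cd.conv_assoc _ _ _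
      _ = counitForm := by rw [conv_self_unitLeft h2, hinv]
  simpa [unitLeft, counitForm] using congrFun (congrFun (congrFun (congrFun hU 1) f) g) f

theorem sum_one_right_of_CQT1 {R R' : G → F → G → F → k} (h1 : cd.CQT1 R)
    (hinv : cd.conv R R' = counitForm) (g : G) (f : F) :
    ∑ x : G, R g f x 1 = if g = 1 then (1 : k) else 0 := by
  have hW : unitRight R = counitForm :=
    calc unitRight R = cd.conv (unitRight R) counitForm := (cd.conv_counitForm _).symm
      _ = cd.conv (unitRight R) (cd.conv R R') := by rw [hinv]
      _ = cd.conv (cd.conv (unitRight R) R) R' := (cd.conv_assoc _ _ _).symm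
      _ = counitForm := by rw [conv_unitRight_self h1, hinv]
  simpa [unitRight, counitForm] using congrFun (congrFun (congrFun (congrFun hW g) f) 1) f

/-- `R'(a, b) = R(S a, b)`, with the antipode `S` of `H`. -/
def antipodeForm (R : G → F → G → F → k) : G → F → G → F → k :=
  fun g f h f' =>
    (((cd.sig g⁻¹ (mp.rtr g f) (mp.rtr g f)⁻¹ * cd.tau g⁻¹ g f)⁻¹ : kˣ) : k)
      * R (mp.ltl g f)⁻¹ (mp.rtr g f)⁻¹ h f'

theorem conv_antipodeForm {R : G → F → G → F → k} (h2 : cd.CQT2 R)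
    (h0 : ∀ (g : G) (f : F), ∑ x : G, R x 1 g f = if g = 1 then (1 : k) else 0) :
    cd.conv R (cd.antipodeForm R) = counitForm := by
  funext g f h f'
  have inner : ∀ (t : k) (a : G) (φ : F) (x : G), ∑ y : G,
      t * ((cd.tau (h * y⁻¹) y f' : kˣ) : k) * R a φ (h * y⁻¹) (mp.rtr y f')
        * cd.antipodeForm R x f y f'
      = t * (((cd.sig x⁻¹ (mp.rtr x f) (mp.rtr x f)⁻¹ * cd.tau x⁻¹ x f)⁻¹ : kˣ) : k)
          * ((if mp.ltl a φ = (mp.ltl x f)⁻¹ then (1 : k) else 0)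
            * ((cd.sig a φ (mp.rtr x f)⁻¹ : kˣ) : k) * R a (φ * (mp.rtr x f)⁻¹) h f') := by
    intro t a φ x
    rw [h2, Finset.mul_sum]
    exact Finset.sum_congr rfl fun y _ => by simp only [antipodeForm]; ring
  simp only [conv, inner, mp.ltl_mul_inv_rtr, mul_eq_right, mp.ltl_eq_one_iff]
  rcases eq_or_ne g 1 with rfl | hg
  · simp only [one_mul, if_pos, mul_inv_cancel, counitForm]
    rw [← h0 h f', ← Equiv.sum_comp (Equiv.inv G) (fun x => R x 1 h f')]
    refine Finset.sum_congr rfl fun x _ => ?_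
    simp only [Units.val_inv_eq_inv_val, Units.val_mul, Equiv.inv_apply]
    field_simp
  · simp [hg, counitForm]

theorem antipodeForm_conv {R : G → F → G → F → k} (h2 : cd.CQT2 R)
    (h0 : ∀ (g : G) (f : F), ∑ x : G, R x 1 g f = if g = 1 then (1 : k) else 0) :
    cd.conv (cd.antipodeForm R) R = counitForm := by
  funext g f h f'
  have inner : ∀ (t : k) (a : G) (φ : F) (x : G), ∑ y : G,
      t * ((cd.tau (h * y⁻¹) y f' : kˣ) : k) * cd.antipodeForm R a φ (h * y⁻¹) (mp.rtr y f')
        * R x f y f'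
      = t * (((cd.sig a⁻¹ (mp.rtr a φ) (mp.rtr a φ)⁻¹ * cd.tau a⁻¹ a φ)⁻¹ : kˣ) : k)
          * ((if mp.ltl (mp.ltl a φ)⁻¹ (mp.rtr a φ)⁻¹ = x then (1 : k) else 0)
            * ((cd.sig (mp.ltl a φ)⁻¹ (mp.rtr a φ)⁻¹ f : kˣ) : k)
            * R (mp.ltl a φ)⁻¹ ((mp.rtr a φ)⁻¹ * f) h f') := by
    intro t a φ x
    rw [h2, Finset.mul_sum]
    exact Finset.sum_congr rfl fun y _ => by simp only [antipodeForm]; ring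
  simp only [conv, inner, mp.ltl_inv_rtr_inv, mul_inv_rev, inv_inv, mul_eq_left, inv_eq_one]
  rcases eq_or_ne g 1 with rfl | hg
  · simp only [one_mul, inv_one, mul_one, if_pos, counitForm, mp.rtr_inv_rtr, mp.ltl_inv_rtr,
      inv_inv, inv_mul_cancel, cd.sig_ltl_inv, cd.tau_inv_rtr]
    rw [← h0 h f', ← Equiv.sum_comp (mp.ltlEquiv f) (fun x => R x 1 h f')]
    refine Finset.sum_congr rfl fun x _ => ?_
    simp only [Units.val_inv_eq_inv_val, Units.val_mul, MatchedPair.ltlEquiv, Equiv.coe_fn_mk]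
    field_simp
  · simp [hg, counitForm]

end CocycleData

section QuasiCommutativity

variable {k F G : Type*} [Field k] [Group F] [Group G] [DecidableEq G] {mp : MatchedPair F G}
variable {cd : CocycleData k F G mp}

theorem mulB_apply (i j : G × F) (l : G) (w : F) :
    mulB mp cd i j (l, w)
      = if i.1 = l ∧ mp.ltl i.1 i.2 = j.1 then
          Finsupp.single (i.2 * j.2) ((cd.sig i.1 i.2 j.2 : kˣ) : k) w
        else 0 := by
  unfold mulB
  by_cases hl : i.1 = l
  · subst hl
    simp [apply_ite (fun p : (G × F) →₀ k => p (i.1, w)),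
      Finsupp.single_apply_left (Prod.mk_right_injective i.1)]
  · simp [hl, apply_ite (fun p : (G × F) →₀ k => p (l, w))]

variable [Fintype G]

theorem sum_smul_mulB_apply (c : G → G → k) (f f' : F) (l : G) (w : F) :
    (∑ x : G, ∑ y : G, c x y • mulB mp cd (x, f) (y, f')) (l, w)
      = Finsupp.single (f * f') (c l (mp.ltl l f) * ((cd.sig l f f' : kˣ) : k)) w := by
  simp only [Finsupp.finsetSum_apply, Finsupp.smul_apply, mulB_apply, smul_eq_mul]
  rw [Fintype.sum_sum_eq_single _ l (mp.ltl l f)]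
  · rw [if_pos ⟨rfl, rfl⟩, ← smul_eq_mul, ← Finsupp.smul_apply, Finsupp.smul_single,
      smul_eq_mul]
  · rintro x y hxy
    rw [if_neg fun ⟨hx, hy⟩ => hxy ⟨hx, hx ▸ hy.symm⟩, mul_zero]

theorem sum_smul_mulB_swap_apply (c : G → G → k) (g h l : G) (f f' w : F) :
    (∑ x : G, ∑ y : G,
        c x y • mulB mp cd (h * y⁻¹, mp.rtr y f') (g * x⁻¹, mp.rtr x f)) (l, w)
      = Finsupp.single
          (mp.rtr (l⁻¹ * h) f' * mp.rtr (mp.ltl (l⁻¹ * h) f' * (mp.ltl h f')⁻¹ * g) f)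
          (c (mp.ltl (l⁻¹ * h) f' * (mp.ltl h f')⁻¹ * g) (l⁻¹ * h)
            * ((cd.sig l (mp.rtr (l⁻¹ * h) f')
                (mp.rtr (mp.ltl (l⁻¹ * h) f' * (mp.ltl h f')⁻¹ * g) f) : kˣ) : k)) w := by
  have hl : h * (l⁻¹ * h)⁻¹ = l := by group
  have hsupp : ∀ x y, (h * y⁻¹ = l ∧ mp.ltl (h * y⁻¹) (mp.rtr y f') = g * x⁻¹)
      ↔ (x = mp.ltl (l⁻¹ * h) f' * (mp.ltl h f')⁻¹ * g ∧ y = l⁻¹ * h) := by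
    intro x y
    rw [mp.ltl_mul_inv_rtr]
    constructor
    · rintro ⟨rfl, hx⟩
      have hx' : x⁻¹ = g⁻¹ * (mp.ltl h f' * (mp.ltl y f')⁻¹) := by rw [hx]; group
      have hy : (h * y⁻¹)⁻¹ * h = y := by group
      rw [hy, ← inv_inv x, hx']
      exact ⟨by group, rfl⟩
    · rintro ⟨rfl, rfl⟩
      exact ⟨hl, by group⟩
  simp only [Finsupp.finsetSum_apply, Finsupp.smul_apply, mulB_apply, smul_eq_mul]
  rw [Fintype.sum_sum_eq_single _ (mp.ltl (l⁻¹ * h) f' * (mp.ltl h f')⁻¹ * g) (l⁻¹ * h)]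
  · rw [if_pos ((hsupp _ _).2 ⟨rfl, rfl⟩), hl, ← smul_eq_mul, ← Finsupp.smul_apply,
      Finsupp.smul_single, smul_eq_mul]
  · intro x y hxy
    rw [if_neg (mt (hsupp x y).1 hxy), mul_zero]

theorem CocycleData.quasiComm_iff_CQT3 (R : G → F → G → F → k) :
    cd.QuasiComm R ↔ cd.CQT3 R := by
  have hl : ∀ h l : G, h * (l⁻¹ * h)⁻¹ = l := fun h l => by group
  have hg : ∀ g a b : G, g * (a * b⁻¹ * g)⁻¹ = b * a⁻¹ := fun g a b => by group
  simp only [CocycleData.QuasiComm, CocycleData.CQT3, Finsupp.ext_iff, Prod.forall,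
    sum_smul_mulB_apply, sum_smul_mulB_swap_apply, hl, hg]
  exact ⟨fun H g h l f f' w => H g h f f' l w, fun H g h f f' l w => H g h l f f' w⟩

end QuasiCommutativity

theorem isCQT_iff_CQT0123_general {k F G : Type*} [Field k]
    [Group F] [Group G] [Fintype G] [DecidableEq G]
    (mp : MatchedPair F G) (cd : CocycleData k F G mp)
    (R : G → F → G → F → k) :
    IsCQT mp cd R ↔
      ((∀ (g : G) (f : F), ∑ x : G, R x 1 g f = if g = 1 then (1 : k) else 0) ∧
       (∀ (g : G) (f : F), ∑ x : G, R g f x 1 = if g = 1 then (1 : k) else 0) ∧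
       (∀ (g h l : G) (f f' f'' : F),
         (if mp.ltl h f' = l then (1 : k) else 0) * ((cd.sig h f' f'' : kˣ) : k)
             * R g f h (f' * f'')
           = ∑ x : G, ((cd.tau (g * x⁻¹) x f : kˣ) : k)
               * R (g * x⁻¹) (mp.rtr x f) l f'' * R x f h f') ∧
       (∀ (g h l : G) (f f' f'' : F),
         (if mp.ltl g f = h then (1 : k) else 0) * ((cd.sig g f f' : kˣ) : k)
             * R g (f * f') l f''
           = ∑ x : G, ((cd.tau (l * x⁻¹) x f'' : kˣ) : k)
               * R g f (l * x⁻¹) (mp.rtr x f'') * R h f' x f'') ∧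
       (∀ (g h l : G) (f f' : F),
         (Finsupp.single (f * f')
             (((cd.tau (g * l⁻¹) l f : kˣ) : k)
               * ((cd.tau (h * (mp.ltl l f)⁻¹) (mp.ltl l f) f' : kˣ) : k)
               * R (g * l⁻¹) (mp.rtr l f) (h * (mp.ltl l f)⁻¹)
                   (mp.rtr (mp.ltl l f) f')
               * ((cd.sig l f f' : kˣ) : k)) : F →₀ k)
           = Finsupp.single
               (mp.rtr (l⁻¹ * h) f'
                 * mp.rtr (mp.ltl (l⁻¹ * h) f' * (mp.ltl h f')⁻¹ * g) f)
               (((cd.tau (mp.ltl h f' * (mp.ltl (l⁻¹ * h) f')⁻¹)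
                     (mp.ltl (l⁻¹ * h) f' * (mp.ltl h f')⁻¹ * g) f : kˣ) : k)
                 * ((cd.tau l (l⁻¹ * h) f' : kˣ) : k)
                 * R (mp.ltl (l⁻¹ * h) f' * (mp.ltl h f')⁻¹ * g) f (l⁻¹ * h) f'
                 * ((cd.sig l (mp.rtr (l⁻¹ * h) f')
                     (mp.rtr (mp.ltl (l⁻¹ * h) f' * (mp.ltl h f')⁻¹ * g) f) : kˣ) : k)))) := by
  constructor
  · rintro ⟨⟨R', hRR', hR'R⟩, h1, h2, hq⟩
    exact ⟨cd.sum_one_left_of_CQT2 h2 (cd.conv_eq_counitForm_iff.2 hR'R),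
      cd.sum_one_right_of_CQT1 h1 (cd.conv_eq_counitForm_iff.2 hRR'), h1, h2,
      (cd.quasiComm_iff_CQT3 R).1 hq⟩
  · rintro ⟨h0, -, h1, h2, h3⟩
    exact ⟨⟨cd.antipodeForm R, cd.conv_eq_counitForm_iff.1 (cd.conv_antipodeForm h2 h0),
      cd.conv_eq_counitForm_iff.1 (cd.antipodeForm_conv h2 h0)⟩, h1, h2,
      (cd.quasiComm_iff_CQT3 R).2 h3⟩

/-- Characterization of coquasitriangular structures on `H = k^G τ#_σ kF`: a bilinear
form `R` (given by its values on the basis `{p_g # f}`) is a coquasitriangular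
structure if and only if conditions (CQT0)-(CQT3) hold, where (CQT3) is an identity in
the group algebra `kF` (realized as `F →₀ k`). -/
theorem isCQT_iff_CQT0123 {k F G : Type*} [Field k] [IsAlgClosed k] [CharZero k]
    [Group F] [Group G] [Fintype G] [DecidableEq G]
    (mp : MatchedPair F G) (cd : CocycleData k F G mp)
    (R : G → F → G → F → k) :
    IsCQT mp cd R ↔
      ((∀ (g : G) (f : F), ∑ x : G, R x 1 g f = if g = 1 then (1 : k) else 0) ∧
       (∀ (g : G) (f : F), ∑ x : G, R g f x 1 = if g = 1 then (1 : k) else 0) ∧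
       (∀ (g h l : G) (f f' f'' : F),
         (if mp.ltl h f' = l then (1 : k) else 0) * ((cd.sig h f' f'' : kˣ) : k)
             * R g f h (f' * f'')
           = ∑ x : G, ((cd.tau (g * x⁻¹) x f : kˣ) : k)
               * R (g * x⁻¹) (mp.rtr x f) l f'' * R x f h f') ∧
       (∀ (g h l : G) (f f' f'' : F),
         (if mp.ltl g f = h then (1 : k) else 0) * ((cd.sig g f f' : kˣ) : k)
             * R g (f * f') l f''
           = ∑ x : G, ((cd.tau (l * x⁻¹) x f'' : kˣ) : k)
               * R g f (l * x⁻¹) (mp.rtr x f'') * R h f' x f'') ∧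
       (∀ (g h l : G) (f f' : F),
         (Finsupp.single (f * f')
             (((cd.tau (g * l⁻¹) l f : kˣ) : k)
               * ((cd.tau (h * (mp.ltl l f)⁻¹) (mp.ltl l f) f' : kˣ) : k)
               * R (g * l⁻¹) (mp.rtr l f) (h * (mp.ltl l f)⁻¹)
                   (mp.rtr (mp.ltl l f) f')
               * ((cd.sig l f f' : kˣ) : k)) : F →₀ k)
           = Finsupp.single
               (mp.rtr (l⁻¹ * h) f'
                 * mp.rtr (mp.ltl (l⁻¹ * h) f' * (mp.ltl h f')⁻¹ * g) f)
               (((cd.tau (mp.ltl h f' * (mp.ltl (l⁻¹ * h) f')⁻¹)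
                     (mp.ltl (l⁻¹ * h) f' * (mp.ltl h f')⁻¹ * g) f : kˣ) : k)
                 * ((cd.tau l (l⁻¹ * h) f' : kˣ) : k)
                 * R (mp.ltl (l⁻¹ * h) f' * (mp.ltl h f')⁻¹ * g) f (l⁻¹ * h) f'
                 * ((cd.sig l (mp.rtr (l⁻¹ * h) f')
                     (mp.rtr (mp.ltl (l⁻¹ * h) f' * (mp.ltl h f')⁻¹ * g) f) : kˣ) : k)))) :=
  isCQT_iff_CQT0123_general mp cd R
end

section
/- Let G be a finite group, F an abelian group, (F, G, ◁, ▷) a matched pair, σ, τ cocycle data, and let (k^G τ#_σ kF, R) be a coquasitriangular Hopf algebra. For g, h ∈ G and f, f' ∈ F: if either (g ∈ G_f and h ∉ G_{f'}) or (g ∉ G_f and h ∈ G_{f'}), where G_f = {x ∈ G : x ▷ f = f}, then R(p_g # f, p_h # f') = 0. -/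
/-!
Compare the coefficients of `p_1 # c` on the two sides of the quasi-commutativity axiom
`Σ R(a₁, b₁) a₂ b₂ = Σ b₁ a₁ R(a₂, b₂)` for `a = p_g # f`, `b = p_h # f'`. Since
`1 ◁ f = 1`, a product `(p_x # u)(p_y # v)` has a `p_1`-component only when `x = y = 1`; hence the
left side contributes `R(p_g # f, p_h # f')` exactly at `c = f f'` and the right side exactly at
`c = (h ▷ f')(g ▷ f)`. So `R(p_g # f, p_h # f')` vanishes unless `f f' = (h ▷ f')(g ▷ f)`, and for
abelian `F` that equation forces `g ▷ f = f ↔ h ▷ f' = f'`.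
-/

lemma MatchedPair.one_ltl_s14 {F G : Type*} [Group F] [Group G] (mp : MatchedPair F G) (f : F) :
    mp.ltl 1 f = 1 := by
  have h := mp.mul_ltl 1 1 f
  rw [one_mul, mp.one_rtr] at h
  exact mul_eq_left.mp h.symm

section

variable {k F G : Type*} [Field k] [Group F] [Group G] [DecidableEq F] [DecidableEq G]
  (mp : MatchedPair F G) (cd : CocycleData k F G mp)

lemma mulB_apply_one (i j : G × F) (c : F) :
    mulB mp cd i j (1, c) = if i.1 = 1 ∧ j.1 = 1 ∧ i.2 * j.2 = c then 1 else 0 := by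
  obtain ⟨x, u⟩ := i
  obtain ⟨y, v⟩ := j
  by_cases hx : x = 1
  · subst hx
    simp only [mulB, mp.one_ltl_s14, cd.one_sig, Units.val_one, true_and, eq_comm (a := (1 : G))]
    split_ifs <;> simp_all
  · simp only [mulB, hx, false_and, if_false]
    split_ifs
    · exact Finsupp.single_eq_of_ne fun hp => hx (congrArg Prod.fst hp).symm
    · rfl

variable [Fintype G]

lemma sum_smul_mulB_apply_one (a : G → G → k) (f f' c : F) :
    (∑ x : G, ∑ y : G, a x y • mulB mp cd (x, f) (y, f')) (1, c)
      = if f * f' = c then a 1 1 else 0 := by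
  simp only [Finsupp.finsetSum_apply, Finsupp.smul_apply, smul_eq_mul, mulB_apply_one,
    mul_ite, mul_one, mul_zero, ite_and, Finset.sum_ite_irrel, Finset.sum_const_zero,
    Fintype.sum_ite_eq']

lemma sum_smul_mulB_swap_apply_one (a : G → G → k) (g h : G) (f f' c : F) :
    (∑ x : G, ∑ y : G,
        a x y • mulB mp cd (h * y⁻¹, mp.rtr y f') (g * x⁻¹, mp.rtr x f)) (1, c)
      = if mp.rtr h f' * mp.rtr g f = c then a g h else 0 := by
  simp only [Finsupp.finsetSum_apply, Finsupp.smul_apply, smul_eq_mul, mulB_apply_one,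
    mul_inv_eq_one, mul_ite, mul_one, mul_zero, ite_and, Finset.sum_ite_eq, Finset.mem_univ,
    if_true]

end

theorem IsCQT.R_eq_zero_of_mul_ne {k F G : Type*} [Field k] [Group F] [Group G] [Fintype G]
    [DecidableEq G] {mp : MatchedPair F G} {cd : CocycleData k F G mp}
    {R : G → F → G → F → k} (hR : IsCQT mp cd R)
    {g h : G} {f f' : F} (hne : f * f' ≠ mp.rtr h f' * mp.rtr g f) : R g f h f' = 0 := by
  classical
  have hcoeff := DFunLike.congr_fun (hR.qcomm g h f f') (1, mp.rtr h f' * mp.rtr g f)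
  rw [sum_smul_mulB_apply_one, sum_smul_mulB_swap_apply_one, if_neg hne, if_pos rfl] at hcoeff
  simpa only [mul_inv_cancel, cd.one_tau, mp.one_rtr, Units.val_one, one_mul] using hcoeff.symm

theorem R_eq_zero_of_stabilizer_mismatch_general {k F G : Type*} [Field k]
    [CommGroup F] [Group G] [Fintype G] [DecidableEq G]
    (mp : MatchedPair F G) (cd : CocycleData k F G mp)
    (R : G → F → G → F → k) (hR : IsCQT mp cd R)
    (g h : G) (f f' : F)
    (hcase : (mp.rtr g f = f ∧ mp.rtr h f' ≠ f') ∨ (mp.rtr g f ≠ f ∧ mp.rtr h f' = f')) :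
    R g f h f' = 0 := by
  refine hR.R_eq_zero_of_mul_ne fun hEq => ?_
  rw [mul_comm f f'] at hEq
  rcases hcase with ⟨hg, hh⟩ | ⟨hg, hh⟩
  · rw [hg] at hEq
    exact hh (mul_right_cancel hEq).symm
  · rw [hh] at hEq
    exact hg (mul_left_cancel hEq).symm

/-- Let `F` be abelian and `(k^G τ#_σ kF, R)` coquasitriangular. If either
(`g ∈ G_f` and `h ∉ G_{f'}`) or (`g ∉ G_f` and `h ∈ G_{f'}`), then
`R(p_g # f, p_h # f') = 0`. -/
theorem R_eq_zero_of_stabilizer_mismatch {k F G : Type*} [Field k] [IsAlgClosed k]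
    [CharZero k] [CommGroup F] [Group G] [Fintype G] [DecidableEq G]
    (mp : MatchedPair F G) (cd : CocycleData k F G mp)
    (R : G → F → G → F → k) (hR : IsCQT mp cd R)
    (g h : G) (f f' : F)
    (hcase : (mp.rtr g f = f ∧ mp.rtr h f' ≠ f') ∨ (mp.rtr g f ≠ f ∧ mp.rtr h f' = f')) :
    R g f h f' = 0 :=
  R_eq_zero_of_stabilizer_mismatch_general mp cd R hR g h f f' hcase
end

section
/- Let G = Z₂ = {1, g}, F a group, (F, Z₂, ◁, ▷) a matched pair (so ◁ is trivial), σ, τ cocycle data, and let (k^{Z₂} τ#_σ kF, R) be a coquasitriangular Hopf algebra. Then exactly one of the following two cases holds: (1) R(p_1#1, p_1#1) = R(p_1#1, p_g#1) = R(p_g#1, p_1#1) = 1/2 and R(p_g#1, p_g#1) = −1/2; or (2) R(p_1#1, p_1#1) = 1 and R(p_1#1, p_g#1) = R(p_g#1, p_1#1) = R(p_g#1, p_g#1) = 0. -/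
theorem MatchedPair.rtr_one_s18 {F G : Type*} [Group F] [Group G] (mp : MatchedPair F G) (x : G) :
    mp.rtr x 1 = 1 := by
  have h := mp.rtr_mul x 1 1
  rwa [mul_one, mp.ltl_one, left_eq_mul] at h

/-- The conditions `r(a, bc) = Σ r(a₁, c) r(a₂, b)` and `r(ab, c) = Σ r(a, c₁) r(b, c₂)` for a
bilinear form on `k^G`, written on the basis `{p_x}` through `r x y = r(p_x, p_y)`. -/
structure IsBimultiplicativeForm {k G : Type*} [Field k] [Group G] [Fintype G] [DecidableEq G]
    (r : G → G → k) : Prop where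
  mul_right : ∀ a h l : G, (if h = l then (1 : k) else 0) * r a h = ∑ x : G, r (a * x⁻¹) l * r x h
  mul_left : ∀ a h l : G, (if a = h then (1 : k) else 0) * r a l = ∑ x : G, r a (l * x⁻¹) * r h x

namespace IsCQT

variable {k F G : Type*} [Field k] [Group F] [Group G] [Fintype G] [DecidableEq G]
  {mp : MatchedPair F G} {cd : CocycleData k F G mp} {R : G → F → G → F → k}

theorem isBimultiplicativeForm_one (hR : IsCQT mp cd R) :
    IsBimultiplicativeForm (fun x y => R x 1 y 1) where
  mul_right a h l := by
    simpa [mp.ltl_one, cd.sig_one_left, cd.tau_one_right, mp.rtr_one_s18] using hR.cqt1 a h l 1 1 1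
  mul_left a h l := by
    simpa [mp.ltl_one, cd.sig_one_left, cd.tau_one_right, mp.rtr_one_s18] using hR.cqt2 a h l 1 1 1

theorem restrict_one_ne_zero (hR : IsCQT mp cd R) : (fun x y => R x 1 y 1) ≠ 0 := by
  intro h0
  obtain ⟨R', hR', -⟩ := hR.conv_inv
  have := hR' 1 1 1 1
  simp only [funext_iff, Pi.zero_apply] at h0
  simp [mp.rtr_one_s18, h0] at this

end IsCQT

section Field

variable {k : Type*} [Field k]

-- Also in characteristic 2, where `1 / 2 = 0`.
theorem one_div_two_ne_one : (1 : k) / 2 ≠ 1 := by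
  intro h
  have h2 : (2 : k) = 1 := by simpa using congrArg (·⁻¹) h
  exact one_ne_zero (by linear_combination h2 : (1 : k) = 0)

theorem eq_one_zero_zero_zero {a b c d : k} (hb : b = 0) (haa : a = a * a + c * c)
    (hab : a = a * a + b * b) (hbd : b = b * b + d * d)
    (hne : ¬(a = 0 ∧ b = 0 ∧ c = 0 ∧ d = 0)) :
    a = 1 ∧ b = 0 ∧ c = 0 ∧ d = 0 := by
  have hc : c = 0 := mul_self_eq_zero.mp (by linear_combination hab - haa + b * hb)
  have hd : d = 0 := mul_self_eq_zero.mp (by linear_combination -hbd + (1 - b) * hb)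
  have ha : a * (a - 1) = 0 := by linear_combination -haa - c * hc
  refine ⟨?_, hb, hc, hd⟩
  rcases mul_eq_zero.mp ha with ha | ha
  · exact absurd ⟨ha, hb, hc, hd⟩ hne
  · linear_combination ha

theorem eq_half_half_half_neg_half {a b c d : k} (hb : b ≠ 0) (haa : a = a * a + c * c)
    (hba : b = b * a + a * b) (hdabc : 0 = d * a + b * c) (hdb : d = d * b + b * d)
    (hdc : d = d * c + c * d) :
    a = 1 / 2 ∧ b = 1 / 2 ∧ c = 1 / 2 ∧ d = -(1 / 2) := by
  have ha2 : 2 * a = 1 := mul_left_cancel₀ hb (by linear_combination -hba)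
  have h2 : (2 : k) ≠ 0 := left_ne_zero_of_mul_eq_one ha2
  have ha : a = 1 / 2 := eq_div_of_mul_eq h2 (by linear_combination ha2)
  have hc : c ≠ 0 := by
    rintro rfl
    exact one_ne_zero (by linear_combination 4 * haa + (2 * a - 1) * ha2 : (1 : k) = 0)
  have hd : d = -(2 * b * c) := by linear_combination -2 * hdabc - d * ha2
  have hd0 : d ≠ 0 := by rw [hd]; simp [h2, hb, hc]
  have half {x : k} (hx : d = d * x + x * d) : x = 1 / 2 :=
    eq_div_of_mul_eq h2 (mul_left_cancel₀ hd0 (by linear_combination -hx))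
  have hb' := half hdb
  have hc' := half hdc
  refine ⟨ha, hb', hc', ?_⟩
  rw [hd, hb', hc']
  field_simp

end Field

section GroupOfOrderTwo

variable {G : Type*} [Group G] [Fintype G]

theorem univ_eq_pair_of_card_eq_two [DecidableEq G] {g : G} (hG : Fintype.card G = 2)
    (hg : g ≠ 1) :
    (Finset.univ : Finset G) = {1, g} :=
  (Finset.eq_univ_of_card _ (by rw [Finset.card_pair hg.symm, hG])).symm

theorem inv_eq_self_of_card_eq_two (hG : Fintype.card G = 2) (g : G) : g⁻¹ = g :=
  inv_eq_of_mul_eq_one_right (by rw [← sq, ← hG, pow_card_eq_one])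

theorem IsBimultiplicativeForm.cases_of_card_eq_two {k : Type*} [Field k] [DecidableEq G]
    {g : G} (hG : Fintype.card G = 2) (hg : g ≠ 1) {r : G → G → k}
    (hr : IsBimultiplicativeForm r) (hr0 : r ≠ 0) :
    Xor (r 1 1 = 1 / 2 ∧ r 1 g = 1 / 2 ∧ r g 1 = 1 / 2 ∧ r g g = -(1 / 2))
      (r 1 1 = 1 ∧ r 1 g = 0 ∧ r g 1 = 0 ∧ r g g = 0) := by
  have hsum (φ : G → k) : ∑ x, φ x = φ 1 + φ g := by
    rw [univ_eq_pair_of_card_eq_two hG hg, Finset.sum_pair hg.symm]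
  have hginv := inv_eq_self_of_card_eq_two hG g
  have hgg : g * g = 1 := by rw [← mul_inv_cancel g, hginv]
  have hright (a h l : G) := (hr.mul_right a h l).trans (hsum _)
  have hleft (a h l : G) := (hr.mul_left a h l).trans (hsum _)
  have haa : r 1 1 = r 1 1 * r 1 1 + r g 1 * r g 1 := by
    simpa [hginv, hgg] using hright 1 1 1
  have hab : r 1 1 = r 1 1 * r 1 1 + r 1 g * r 1 g := by
    simpa [hginv, hgg] using hleft 1 1 1
  have hbd : r 1 g = r 1 g * r 1 g + r g g * r g g := by
    simpa [hginv, hgg] using hright 1 g g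
  have hba : r 1 g = r 1 g * r 1 1 + r 1 1 * r 1 g := by
    simpa [hginv, hgg] using hleft 1 1 g
  have hdabc : 0 = r g g * r 1 1 + r 1 g * r g 1 := by
    simpa [hginv, hgg, hg.symm] using hright g 1 g
  have hdb : r g g = r g g * r 1 g + r 1 g * r g g := by
    simpa [hginv, hgg] using hright g g g
  have hdc : r g g = r g g * r g 1 + r g 1 * r g g := by
    simpa [hginv, hgg] using hleft g g g
  have hne : ¬(r 1 1 = 0 ∧ r 1 g = 0 ∧ r g 1 = 0 ∧ r g g = 0) := by
    rintro ⟨ha, hb, hc, hd⟩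
    refine hr0 (funext fun x => funext fun y => ?_)
    have hx := Finset.mem_univ x
    have hy := Finset.mem_univ y
    simp only [univ_eq_pair_of_card_eq_two hG hg, Finset.mem_insert, Finset.mem_singleton] at hx hy
    rcases hx with rfl | rfl <;> rcases hy with rfl | rfl <;> assumption
  rcases eq_or_ne (r 1 g) 0 with hb | hb
  · have h := eq_one_zero_zero_zero hb haa hab hbd hne
    exact Or.inr ⟨h, fun h' => one_div_two_ne_one (h'.1.symm.trans h.1)⟩
  · have h := eq_half_half_half_neg_half hb haa hba hdabc hdb hdc
    exact Or.inl ⟨h, fun h' => one_div_two_ne_one (h.1.symm.trans h'.1)⟩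

end GroupOfOrderTwo

theorem R_on_units_of_Z2_general {k F G : Type*} [Field k]
    [Group F] [Group G] [Fintype G] [DecidableEq G]
    (hG : Fintype.card G = 2) (g : G) (hg : g ≠ 1)
    (mp : MatchedPair F G) (cd : CocycleData k F G mp)
    (R : G → F → G → F → k) (hR : IsCQT mp cd R) :
    Xor'
      (R 1 1 1 1 = 1 / 2 ∧ R 1 1 g 1 = 1 / 2 ∧ R g 1 1 1 = 1 / 2 ∧
        R g 1 g 1 = -(1 / 2))
      (R 1 1 1 1 = 1 ∧ R 1 1 g 1 = 0 ∧ R g 1 1 1 = 0 ∧ R g 1 g 1 = 0) :=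
  hR.isBimultiplicativeForm_one.cases_of_card_eq_two hG hg hR.restrict_one_ne_zero

/-- Let `G = Z₂ = {1, g}` (a group of order 2 with `g` its non-identity element) and
let `(k^{Z₂} τ#_σ kF, R)` be coquasitriangular. Then exactly one of the following
holds: (1) `R(p_1#1, p_1#1) = R(p_1#1, p_g#1) = R(p_g#1, p_1#1) = 1/2` and
`R(p_g#1, p_g#1) = -1/2`; or (2) `R(p_1#1, p_1#1) = 1` and
`R(p_1#1, p_g#1) = R(p_g#1, p_1#1) = R(p_g#1, p_g#1) = 0`. -/
theorem R_on_units_of_Z2 {k F G : Type*} [Field k] [IsAlgClosed k] [CharZero k]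
    [Group F] [Group G] [Fintype G] [DecidableEq G]
    (hG : Fintype.card G = 2) (g : G) (hg : g ≠ 1)
    (mp : MatchedPair F G) (cd : CocycleData k F G mp)
    (R : G → F → G → F → k) (hR : IsCQT mp cd R) :
    Xor'
      (R 1 1 1 1 = 1 / 2 ∧ R 1 1 g 1 = 1 / 2 ∧ R g 1 1 1 = 1 / 2 ∧
        R g 1 g 1 = -(1 / 2))
      (R 1 1 1 1 = 1 ∧ R 1 1 g 1 = 0 ∧ R g 1 1 1 = 0 ∧ R g 1 g 1 = 0) :=
  R_on_units_of_Z2_general hG g hg mp cd R hR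
end
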